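/- Let A, B, C ∈ ℂ^{r×r} with C + nI invertible for all integers n ≥ 0, let B and C commute, and let |x| < 1. (i) If A + kI is invertible for all integers k ≥ 0, then for every non-negative integer s: ₂F₁(A+sI, B; C; x) = ₂F₁(A, B; C; x) + x·[∑_{k=1}^{s} ₂F₁(A+kI, B+I; C+I; x)]·B·C⁻¹. (ii) If moreover A − kI is invertible for all integers 1 ≤ k ≤ s, then ₂F₁(A−sI, B; C; x) = ₂F₁(A, B; C; x) − x·[∑_{k=0}^{s−1} ₂F₁(A−kI, B+I; C+I; x)]·B·C⁻¹. -/

import Mathlib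

/-- The shifted factorial (Pochhammer) matrix: `(A)_0 = I`, `(A)_{n+1} = (A)_n (A + nI)`. -/
noncomputable def mPoch {r : ℕ} (A : Matrix (Fin r) (Fin r) ℂ) : ℕ → Matrix (Fin r) (Fin r) ℂ
  | 0 => 1
  | n + 1 => mPoch A n * (A + (n : ℂ) • 1)

/-- The Gauss hypergeometric matrix function `₂F₁(A, B; C; x)`. -/
noncomputable def hypF21 {r : ℕ} (A B C : Matrix (Fin r) (Fin r) ℂ) (x : ℂ) :
    Matrix (Fin r) (Fin r) ℂ :=
  ∑' n : ℕ, ((n.factorial : ℂ)⁻¹ * x ^ n) • (mPoch A n * mPoch B n * (mPoch C n)⁻¹)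

/-!
The heart of the argument is the contiguous relation
`₂F₁(A + I, B; C; x) = ₂F₁(A, B; C; x) + x ₂F₁(A + I, B + I; C + I; x) B C⁻¹`,
obtained termwise from `(A + I)ₙ₊₁ = (A)ₙ₊₁ + (n + 1)(A + I)ₙ` together with
`(B)ₙ₊₁ (C)ₙ₊₁⁻¹ = (B + I)ₙ (C + I)ₙ⁻¹ B C⁻¹`, where `B` can be moved to the right because it
commutes with `C`. Telescoping it `s` steps up or down from `A` gives both formulas.
For `|x| < 1` all series converge absolutely by the ratio test applied to a scalar majorant,
using `‖(C + nI)⁻¹‖ ≤ 1 / (n - ‖C‖)` for `n > ‖C‖`.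
-/
open Finset Filter Topology

section Telescoping

variable {R V W : Type*} [Semiring R] [AddCommGroup V] [Module R V] [AddCommGroup W]

theorem apply_add_natCast_smul_eq_add_sum (F G : V → W) (e : V)
    (h : ∀ v, F (v + e) = F v + G (v + e)) (v : V) (s : ℕ) :
    F (v + (s : R) • e) = F v + ∑ k ∈ Icc 1 s, G (v + (k : R) • e) := by
  induction s with
  | zero => simp
  | succ s ih =>
    rw [sum_Icc_succ_top (by omega), ← add_assoc, ← ih, Nat.cast_succ, add_smul, one_smul,
      ← add_assoc, h]

theorem apply_sub_natCast_smul_eq_sub_sum (F G : V → W) (e : V)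
    (h : ∀ v, F (v + e) = F v + G (v + e)) (v : V) (s : ℕ) :
    F (v - (s : R) • e) = F v - ∑ k ∈ range s, G (v - (k : R) • e) := by
  induction s with
  | zero => simp
  | succ s ih =>
    have step := h (v - ((s + 1 : ℕ) : R) • e)
    rw [Nat.cast_succ, add_smul, one_smul, sub_add_eq_sub_sub, sub_add_cancel] at step
    rw [sum_range_succ, sub_add_eq_sub_sub, ← ih, step, Nat.cast_succ, add_smul, one_smul,
      sub_add_eq_sub_sub]
    abel

end Telescoping

variable {r : ℕ}

local notation "Mat" => Matrix (Fin r) (Fin r) ℂ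

theorem Commute.mPoch_right {X A : Mat} (h : Commute X A) (n : ℕ) : Commute X (mPoch A n) := by
  induction n with
  | zero => exact Commute.one_right X
  | succ n ih => exact ih.mul_right (h.add_right ((Commute.one_right X).smul_right _))

theorem add_one_add_natCast_smul_one (A : Mat) (n : ℕ) :
    A + 1 + (n : ℂ) • 1 = A + ((n + 1 : ℕ) : ℂ) • 1 := by
  rw [Nat.cast_succ, add_smul, one_smul, add_right_comm, add_assoc]

theorem mPoch_succ' (A : Mat) (n : ℕ) : mPoch A (n + 1) = A * mPoch (A + 1) n := by
  induction n with
  | zero => simp [mPoch]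
  | succ n ih => rw [mPoch, ih, mPoch, add_one_add_natCast_smul_one, mul_assoc]

theorem mPoch_add_one_succ (A : Mat) (n : ℕ) :
    mPoch (A + 1) (n + 1) = mPoch A (n + 1) + ((n : ℂ) + 1) • mPoch (A + 1) n := by
  rw [mPoch, add_one_add_natCast_smul_one, Nat.cast_succ, mul_add, mul_smul_comm, mul_one,
    mPoch_succ', (((Commute.refl A).add_right (Commute.one_right A)).mPoch_right n).eq]

theorem isUnit_mPoch {C : Mat} (hC : ∀ n : ℕ, IsUnit (C + (n : ℂ) • (1 : Mat))) (n : ℕ) :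
    IsUnit (mPoch C n) := by
  induction n with
  | zero => exact isUnit_one
  | succ n ih => exact ih.mul (hC n)

theorem Commute.matrix_inv_right {X M : Mat} (h : Commute X M) (hM : IsUnit M) :
    Commute X M⁻¹ := by
  obtain ⟨u, rfl⟩ := hM
  rw [← Matrix.coe_units_inv]
  exact h.units_inv_right

theorem isUnit_add_one_add_natCast_smul_one {C : Mat}
    (hC : ∀ n : ℕ, IsUnit (C + (n : ℂ) • (1 : Mat))) (n : ℕ) : IsUnit (C + 1 + (n : ℂ) • 1) :=
  add_one_add_natCast_smul_one C n ▸ hC (n + 1)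

theorem mPoch_succ_mul_inv_mPoch_succ {B C : Mat} (hC : ∀ n : ℕ, IsUnit (C + (n : ℂ) • (1 : Mat)))
    (hBC : Commute B C) (n : ℕ) :
    mPoch B (n + 1) * (mPoch C (n + 1))⁻¹ = mPoch (B + 1) n * (mPoch (C + 1) n)⁻¹ * B * C⁻¹ := by
  have hC' : IsUnit (mPoch (C + 1) n) :=
    isUnit_mPoch (isUnit_add_one_add_natCast_smul_one hC) n
  have hB : Commute B (mPoch (B + 1) n * (mPoch (C + 1) n)⁻¹) :=
    (((Commute.refl B).add_right (Commute.one_right B)).mPoch_right n).mul_right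
      (((hBC.add_right (Commute.one_right B)).mPoch_right n).matrix_inv_right hC')
  rw [mPoch_succ' B, mPoch_succ' C, Matrix.mul_inv_rev, ← mul_assoc, mul_assoc B, hB.eq]

noncomputable def hypF21Term (A B C : Mat) (x : ℂ) (n : ℕ) : Mat :=
  ((n.factorial : ℂ)⁻¹ * x ^ n) • (mPoch A n * mPoch B n * (mPoch C n)⁻¹)

theorem hypF21_eq_tsum (A B C : Mat) (x : ℂ) : hypF21 A B C x = ∑' n, hypF21Term A B C x n :=
  rfl

theorem hypF21Term_zero (A B C : Mat) (x : ℂ) : hypF21Term A B C x 0 = 1 := by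
  simp [hypF21Term, mPoch]

theorem hypF21Term_add_one_left_succ (A : Mat) {B C : Mat} (x : ℂ)
    (hC : ∀ n : ℕ, IsUnit (C + (n : ℂ) • (1 : Mat))) (hBC : Commute B C) (n : ℕ) :
    hypF21Term (A + 1) B C x (n + 1) =
      hypF21Term A B C x (n + 1) + x • (hypF21Term (A + 1) (B + 1) (C + 1) x n * B * C⁻¹) := by
  have hcoef : ((n + 1).factorial : ℂ)⁻¹ * x ^ (n + 1) * ((n : ℂ) + 1) =
      x * ((n.factorial : ℂ)⁻¹ * x ^ n) := by
    rw [Nat.factorial_succ, Nat.cast_mul, Nat.cast_succ]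
    field_simp
    ring
  simp only [hypF21Term, mPoch_add_one_succ, add_mul, smul_mul_assoc, mul_assoc,
    mPoch_succ_mul_inv_mPoch_succ hC hBC, smul_add, smul_smul, ← hcoef]

section Summable

attribute [local instance] Matrix.linftyOpNormedRing Matrix.linftyOpNormedAlgebra

theorem Matrix.linfty_opNorm_one_le {n α : Type*} [Fintype n] [DecidableEq n] [NormedRing α]
    [NormOneClass α] : ‖(1 : Matrix n n α)‖ ≤ 1 := by
  rw [← Matrix.diagonal_one, Matrix.linfty_opNorm_diagonal]
  exact (pi_norm_le_iff_of_nonneg zero_le_one).2 fun _ => norm_one.le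

theorem norm_add_natCast_smul_one_le (A : Mat) (n : ℕ) : ‖A + (n : ℂ) • 1‖ ≤ ‖A‖ + n := by
  calc ‖A + (n : ℂ) • 1‖ ≤ ‖A‖ + ‖(n : ℂ) • (1 : Mat)‖ := norm_add_le _ _
    _ ≤ ‖A‖ + n := by
      rw [norm_smul, Complex.norm_natCast]
      gcongr
      exact mul_le_of_le_one_right n.cast_nonneg Matrix.linfty_opNorm_one_le

theorem norm_mPoch_le (A : Mat) (n : ℕ) : ‖mPoch A n‖ ≤ ∏ k ∈ range n, (‖A‖ + k) := by
  induction n with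
  | zero => exact Matrix.linfty_opNorm_one_le
  | succ n ih =>
    rw [mPoch, prod_range_succ]
    exact (norm_mul_le _ _).trans
      (mul_le_mul ih (norm_add_natCast_smul_one_le A n) (norm_nonneg _) (by positivity))

theorem norm_inv_mPoch_le (C : Mat) (n : ℕ) :
    ‖(mPoch C n)⁻¹‖ ≤ ∏ k ∈ range n, ‖(C + (k : ℂ) • 1)⁻¹‖ := by
  induction n with
  | zero => simpa [mPoch] using Matrix.linfty_opNorm_one_le
  | succ n ih =>
    rw [mPoch, Matrix.mul_inv_rev, prod_range_succ, mul_comm (∏ _ ∈ _, _)]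
    exact (norm_mul_le _ _).trans (by gcongr)

theorem norm_inv_add_natCast_smul_one_le {C : Mat} {n : ℕ} (hC : IsUnit (C + (n : ℂ) • 1))
    (hn : ‖C‖ < n) : ‖(C + (n : ℂ) • 1)⁻¹‖ ≤ (n - ‖C‖)⁻¹ := by
  set V := (C + (n : ℂ) • 1)⁻¹
  have hV : (n : ℂ) • V = 1 - C * V := by
    rw [eq_sub_iff_add_eq', ← smul_one_mul, ← add_mul,
      Matrix.mul_nonsing_inv _ ((Matrix.isUnit_iff_isUnit_det _).mp hC)]
  have hnV : n * ‖V‖ ≤ 1 + ‖C‖ * ‖V‖ := by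
    calc n * ‖V‖ = ‖(n : ℂ) • V‖ := by rw [norm_smul, Complex.norm_natCast]
      _ = ‖1 - C * V‖ := by rw [hV]
      _ ≤ 1 + ‖C‖ * ‖V‖ :=
        (norm_sub_le _ _).trans (add_le_add Matrix.linfty_opNorm_one_le (norm_mul_le _ _))
  rw [← one_div, le_div_iff₀ (sub_pos.2 hn)]
  linarith

theorem norm_hypF21Term_le (A B C : Mat) (x : ℂ) (n : ℕ) :
    ‖hypF21Term A B C x n‖ ≤
      ∏ k ∈ range n, ‖x‖ * (‖A‖ + k) * (‖B‖ + k) * ‖(C + (k : ℂ) • 1)⁻¹‖ / (k + 1) := by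
  calc ‖hypF21Term A B C x n‖
      ≤ ‖x‖ ^ n / n.factorial * ((∏ k ∈ range n, (‖A‖ + k)) * (∏ k ∈ range n, (‖B‖ + k)) *
          ∏ k ∈ range n, ‖(C + (k : ℂ) • 1)⁻¹‖) := by
        rw [hypF21Term, norm_smul, norm_mul, norm_inv, norm_pow, Complex.norm_natCast,
          inv_mul_eq_div]
        gcongr
        refine (norm_mul_le _ _).trans (mul_le_mul ?_ (norm_inv_mPoch_le C n) (norm_nonneg _)
          (by positivity))
        exact (norm_mul_le _ _).trans (mul_le_mul (norm_mPoch_le A n) (norm_mPoch_le B n)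
          (norm_nonneg _) (by positivity))
    _ = _ := by
        rw [← prod_range_add_one_eq_factorial]
        push_cast
        simp only [prod_div_distrib, prod_mul_distrib, prod_const, card_range]
        ring

theorem summable_prod_range_of_eventually_le {q : ℕ → ℝ} (hq : ∀ k, 0 ≤ q k) {ρ : ℝ}
    (hρ : ρ < 1) (h : ∀ᶠ k in atTop, q k ≤ ρ) : Summable fun n => ∏ k ∈ range n, q k := by
  refine summable_of_ratio_norm_eventually_le hρ (h.mono fun k hk => ?_)
  rw [prod_range_succ, norm_mul, mul_comm, Real.norm_of_nonneg (hq k)]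
  exact mul_le_mul_of_nonneg_right hk (norm_nonneg _)

theorem eventually_hypF21_ratio_lt (A B : Mat) {C : Mat}
    (hC : ∀ n : ℕ, IsUnit (C + (n : ℂ) • (1 : Mat))) {x : ℂ} {ρ : ℝ} (hρ : ‖x‖ < ρ) :
    ∀ᶠ k : ℕ in atTop, ‖x‖ * (‖A‖ + k) * (‖B‖ + k) * ‖(C + (k : ℂ) • 1)⁻¹‖ / (k + 1) < ρ := by
  have hlim : Tendsto (fun k : ℕ => ‖x‖ * ((‖A‖ + 1 * k) / (1 + 1 * k)) *
      ((‖B‖ + 1 * k) / (-‖C‖ + 1 * k))) atTop (𝓝 (‖x‖ * (1 / 1) * (1 / 1))) :=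
    ((tendsto_add_mul_div_add_mul_atTop_nhds _ _ _ one_ne_zero).const_mul _).mul
      (tendsto_add_mul_div_add_mul_atTop_nhds _ _ _ one_ne_zero)
  simp only [one_mul, div_one, mul_one, neg_add_eq_sub] at hlim
  filter_upwards [hlim.eventually_lt_const hρ,
    tendsto_natCast_atTop_atTop.eventually_gt_atTop ‖C‖] with k hk hCk
  calc _ ≤ ‖x‖ * (‖A‖ + k) * (‖B‖ + k) * (k - ‖C‖)⁻¹ / (k + 1) := by
        gcongr
        exact norm_inv_add_natCast_smul_one_le (hC k) hCk
    _ = ‖x‖ * ((‖A‖ + k) / (1 + k)) * ((‖B‖ + k) / (k - ‖C‖)) := by ring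
    _ < ρ := hk

theorem summable_hypF21Term (A B : Mat) {C : Mat} {x : ℂ}
    (hC : ∀ n : ℕ, IsUnit (C + (n : ℂ) • (1 : Mat))) (hx : ‖x‖ < 1) :
    Summable (hypF21Term A B C x) := by
  have hρ : ‖x‖ < (‖x‖ + 1) / 2 := by linarith
  refine .of_norm_bounded (summable_prod_range_of_eventually_le (fun k => by positivity)
    (by linarith) ((eventually_hypF21_ratio_lt A B hC hρ).mono fun _ => le_of_lt))
    (norm_hypF21Term_le A B C x)

end Summable

theorem hypF21_add_one_left (A : Mat) {B C : Mat} (x : ℂ)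
    (hC : ∀ n : ℕ, IsUnit (C + (n : ℂ) • (1 : Mat))) (hBC : Commute B C) (hx : ‖x‖ < 1) :
    hypF21 (A + 1) B C x = hypF21 A B C x + x • (hypF21 (A + 1) (B + 1) (C + 1) x * B * C⁻¹) := by
  have hshift := summable_hypF21Term (A + 1) (B + 1) (isUnit_add_one_add_natCast_smul_one hC) hx
  simp only [hypF21_eq_tsum]
  rw [(summable_hypF21Term (A + 1) B hC hx).tsum_eq_zero_add,
    (summable_hypF21Term A B hC hx).tsum_eq_zero_add, hypF21Term_zero, hypF21Term_zero]
  simp only [hypF21Term_add_one_left_succ A x hC hBC]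
  rw [((summable_nat_add_iff 1).2 (summable_hypF21Term A B hC hx)).tsum_add
      (((hshift.mul_right B).mul_right C⁻¹).const_smul x), tsum_const_smul'',
    (hshift.mul_right B).tsum_mul_right, hshift.tsum_mul_right, add_assoc]

theorem hypF21_recursion_A {r : ℕ} (A B C : Matrix (Fin r) (Fin r) ℂ) (x : ℂ)
    (hC : ∀ n : ℕ, IsUnit (C + (n : ℂ) • (1 : Matrix (Fin r) (Fin r) ℂ)))
    (hBC : B * C = C * B) (hx : ‖x‖ < 1) :
    ((∀ k : ℕ, IsUnit (A + (k : ℂ) • (1 : Matrix (Fin r) (Fin r) ℂ))) →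
      ∀ s : ℕ,
        hypF21 (A + (s : ℂ) • 1) B C x =
          hypF21 A B C x +
            x • ((∑ k ∈ Finset.Icc 1 s, hypF21 (A + (k : ℂ) • 1) (B + 1) (C + 1) x) * B * C⁻¹)) ∧
    ((∀ k : ℕ, IsUnit (A + (k : ℂ) • (1 : Matrix (Fin r) (Fin r) ℂ))) →
      ∀ s : ℕ,
        (∀ k : ℕ, 1 ≤ k → k ≤ s → IsUnit (A - (k : ℂ) • (1 : Matrix (Fin r) (Fin r) ℂ))) →
        hypF21 (A - (s : ℂ) • 1) B C x =
          hypF21 A B C x -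
            x • ((∑ k ∈ Finset.range s, hypF21 (A - (k : ℂ) • 1) (B + 1) (C + 1) x) * B * C⁻¹)) := by
  set F := fun M => hypF21 M B C x
  set G := fun M => x • (hypF21 M (B + 1) (C + 1) x * B * C⁻¹)
  have hcontig (M : Matrix (Fin r) (Fin r) ℂ) : F (M + 1) = F M + G (M + 1) :=
    hypF21_add_one_left M x hC hBC hx
  simp only [sum_mul, smul_sum]
  exact ⟨fun _ s => apply_add_natCast_smul_eq_add_sum F G 1 hcontig A s,
    fun _ s _ => apply_sub_natCast_smul_eq_sub_sum F G 1 hcontig A s⟩
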